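/- arXiv:1312.0325 — 3 statements merged into one kernel-verified Lean document; each statement's English description precedes it below -/
import Mathlib

section
/- For every integer d ≥ 2 and every integer n ≥ d+2, there exists a perfect family M of d-element subsets of [n] with |M| ≤ C(n,d)/2, i.e., 2·|M| ≤ C(n,d). -/
/-- `M` is a family of `d`-element subsets of `[n] = {1,...,n}`. -/
def isFam (n d : ℕ) (M : Finset (Finset ℕ)) : Prop :=
  ∀ a ∈ M, a ⊆ Finset.Icc 1 n ∧ a.card = d

/-- Every `(d+1)`-subset of `[n]` contains a member of `M`. -/
def upperPerfect (n d : ℕ) (M : Finset (Finset ℕ)) : Prop :=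
  ∀ u : Finset ℕ, u ⊆ Finset.Icc 1 n → u.card = d + 1 → ∃ a ∈ M, a ⊆ u

/-- Every `(d-1)`-subset of `[n]` is contained in a member of `M`. -/
def lowerPerfect (n d : ℕ) (M : Finset (Finset ℕ)) : Prop :=
  ∀ u : Finset ℕ, u ⊆ Finset.Icc 1 n → u.card = d - 1 → ∃ a ∈ M, u ⊆ a

/-- `M` is perfect: both upper and lower perfect. -/
def perfectFam (n d : ℕ) (M : Finset (Finset ℕ)) : Prop :=
  upperPerfect n d M ∧ lowerPerfect n d M



/-!
For `d = 2`, split `[n]` into two halves and take all pairs inside a half: among any three points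
two lie in the same half, and the family has about half of all pairs. Complementation inside `[n]`
swaps the two perfectness conditions and turns `d`-sets into `(n - d)`-sets, which settles
`n = d + 2`. In general, a perfect family for `(n + 1, d + 1)` is obtained from perfect families
`M'` for `(n, d + 1)` and `N` for `(n, d)` as `M' ∪ {B ∪ {n + 1} | B ∈ N}`, and the bound
`2 |M| ≤ C(n, d)` propagates through Pascal's rule.
-/

open Finset

def HasSmallPerfectFam (n d : ℕ) : Prop :=
  ∃ M : Finset (Finset ℕ), isFam n d M ∧ perfectFam n d M ∧ 2 * #M ≤ n.choose d

section Halves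

variable {n : ℕ} {X Y : Finset ℕ}

lemma isFam_powersetCard_union {k : ℕ} (hXY : X ∪ Y = Icc 1 n) :
    isFam n k (X.powersetCard k ∪ Y.powersetCard k) := by
  intro a ha
  rw [← hXY]
  rcases mem_union.1 ha with h | h <;> rw [mem_powersetCard] at h
  · exact ⟨h.1.trans subset_union_left, h.2⟩
  · exact ⟨h.1.trans subset_union_right, h.2⟩

lemma upperPerfect_two_powersetCard_union (hXY : X ∪ Y = Icc 1 n) :
    upperPerfect n 2 (X.powersetCard 2 ∪ Y.powersetCard 2) := by
  intro u hu hcard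
  have pick : ∀ Z : Finset ℕ, 2 ≤ #(u ∩ Z) → ∃ t ∈ Z.powersetCard 2, t ⊆ u := by
    intro Z hZ
    obtain ⟨t, htu, ht⟩ := exists_subset_card_eq hZ
    exact ⟨t, mem_powersetCard.2 ⟨htu.trans inter_subset_right, ht⟩, htu.trans inter_subset_left⟩
  have hsplit : #u ≤ #(u ∩ X) + #(u ∩ Y) := by
    rw [← hXY, ← inter_eq_left] at hu
    rw [← card_union_add_card_inter, ← inter_union_distrib_left, hu]
    exact Nat.le_add_right _ _
  obtain hX | hY : 2 ≤ #(u ∩ X) ∨ 2 ≤ #(u ∩ Y) := by omega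
  · obtain ⟨t, ht, htu⟩ := pick X hX
    exact ⟨t, mem_union_left _ ht, htu⟩
  · obtain ⟨t, ht, htu⟩ := pick Y hY
    exact ⟨t, mem_union_right _ ht, htu⟩

lemma lowerPerfect_two_powersetCard_union (hXY : X ∪ Y = Icc 1 n) (hX : 2 ≤ #X)
    (hY : 2 ≤ #Y) : lowerPerfect n 2 (X.powersetCard 2 ∪ Y.powersetCard 2) := by
  intro v hv hcard
  obtain ⟨i, rfl⟩ := card_eq_one.1 hcard
  have extend : ∀ Z : Finset ℕ, i ∈ Z → 2 ≤ #Z → ∃ t ∈ Z.powersetCard 2, {i} ⊆ t := by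
    intro Z hiZ hZ
    obtain ⟨t, hit, htZ, ht⟩ :=
      exists_subsuperset_card_eq (singleton_subset_iff.2 hiZ) (by simp) hZ
    exact ⟨t, mem_powersetCard.2 ⟨htZ, ht⟩, hit⟩
  rw [← hXY, singleton_subset_iff, mem_union] at hv
  rcases hv with hiX | hiY
  · obtain ⟨t, ht, hit⟩ := extend X hiX hX
    exact ⟨t, mem_union_left _ ht, hit⟩
  · obtain ⟨t, ht, hit⟩ := extend Y hiY hY
    exact ⟨t, mem_union_right _ ht, hit⟩

end Halves

lemma two_mul_choose_two_add_choose_two_le {a b : ℕ} (hab : a ≤ b) (hba : b ≤ a + 1) :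
    2 * (a.choose 2 + b.choose 2) ≤ (a + b).choose 2 := by
  have ha : (0 : ℚ) ≤ a := a.cast_nonneg
  rw [← Nat.cast_le (α := ℚ)]
  obtain rfl | rfl : b = a ∨ b = a + 1 := by omega
  all_goals
    push_cast [Nat.cast_choose_two]
    linarith

theorem hasSmallPerfectFam_two {n : ℕ} (hn : 4 ≤ n) : HasSmallPerfectFam n 2 := by
  set k := n / 2
  have hXY : Icc 1 k ∪ Ioc k n = Icc 1 n := by
    ext x
    simp only [mem_union, mem_Icc, mem_Ioc]
    omega
  have hX : #(Icc 1 k) = k := by simp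
  have hY : #(Ioc k n) = n - k := by simp
  refine ⟨(Icc 1 k).powersetCard 2 ∪ (Ioc k n).powersetCard 2, isFam_powersetCard_union hXY,
    ⟨upperPerfect_two_powersetCard_union hXY,
      lowerPerfect_two_powersetCard_union hXY (by omega) (by omega)⟩, ?_⟩
  calc 2 * #((Icc 1 k).powersetCard 2 ∪ (Ioc k n).powersetCard 2)
      ≤ 2 * (#((Icc 1 k).powersetCard 2) + #((Ioc k n).powersetCard 2)) :=
        Nat.mul_le_mul_left _ (card_union_le _ _)
    _ = 2 * (k.choose 2 + (n - k).choose 2) := by rw [card_powersetCard, card_powersetCard, hX, hY]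
    _ ≤ (k + (n - k)).choose 2 := two_mul_choose_two_add_choose_two_le (by omega) (by omega)
    _ = n.choose 2 := by rw [Nat.add_sub_cancel' (by omega)]

section Complement

variable {n d : ℕ} {M : Finset (Finset ℕ)}

lemma isFam_image_sdiff (hM : isFam n d M) : isFam n (n - d) (M.image (Icc 1 n \ ·)) := by
  intro _ h
  obtain ⟨a, ha, rfl⟩ := mem_image.1 h
  obtain ⟨haI, hcard⟩ := hM a ha
  exact ⟨sdiff_subset, by rw [card_sdiff_of_subset haI, Nat.card_Icc, hcard, Nat.add_sub_cancel]⟩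

lemma upperPerfect_image_sdiff (hM : lowerPerfect n d M) (hdn : d ≤ n) :
    upperPerfect n (n - d) (M.image (Icc 1 n \ ·)) := by
  intro u hu hcard
  have hcard' : #(Icc 1 n \ u) = d - 1 := by
    rw [card_sdiff_of_subset hu, Nat.card_Icc, hcard]
    omega
  obtain ⟨a, ha, hua⟩ := hM _ sdiff_subset hcard'
  exact ⟨Icc 1 n \ a, mem_image_of_mem _ ha, sdiff_le_comm.1 hua⟩

lemma lowerPerfect_image_sdiff (hM : upperPerfect n d M) (hdn : d < n) :
    lowerPerfect n (n - d) (M.image (Icc 1 n \ ·)) := by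
  intro v hv hcard
  have hcard' : #(Icc 1 n \ v) = d + 1 := by
    rw [card_sdiff_of_subset hv, Nat.card_Icc, hcard]
    omega
  obtain ⟨a, ha, hav⟩ := hM _ sdiff_subset hcard'
  exact ⟨Icc 1 n \ a, mem_image_of_mem _ ha, subset_sdiff.2 ⟨hv, (subset_sdiff.1 hav).2.symm⟩⟩

end Complement

theorem HasSmallPerfectFam.sdiff {n d : ℕ} (h : HasSmallPerfectFam n d) (hdn : d < n) :
    HasSmallPerfectFam n (n - d) := by
  obtain ⟨M, hfam, ⟨hup, hlow⟩, hcard⟩ := h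
  refine ⟨M.image (Icc 1 n \ ·), isFam_image_sdiff hfam,
    ⟨upperPerfect_image_sdiff hlow hdn.le, lowerPerfect_image_sdiff hup hdn⟩, ?_⟩
  rw [Nat.choose_symm hdn.le]
  exact (Nat.mul_le_mul_left 2 card_image_le).trans hcard

section Extension

variable {n d : ℕ} {M N : Finset (Finset ℕ)}

lemma erase_subset_Icc_of_subset_Icc_succ {u : Finset ℕ} (hu : u ⊆ Icc 1 (n + 1)) :
    u.erase (n + 1) ⊆ Icc 1 n := by
  simpa only [Icc_erase_right, Ico_add_one_right_eq_Icc] using erase_subset_erase (n + 1) hu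

lemma isFam_union_image_insert (hM : isFam n (d + 1) M) (hN : isFam n d N) :
    isFam (n + 1) (d + 1) (M ∪ N.image (insert (n + 1))) := by
  have hIcc : Icc 1 n ⊆ Icc 1 (n + 1) := Icc_subset_Icc_right n.le_succ
  intro a ha
  rcases mem_union.1 ha with ha | ha
  · exact ⟨(hM a ha).1.trans hIcc, (hM a ha).2⟩
  · obtain ⟨b, hb, rfl⟩ := mem_image.1 ha
    obtain ⟨hbI, hcard⟩ := hN b hb
    have hnb : n + 1 ∉ b := fun h => by simpa using hbI h
    exact ⟨insert_subset (by simp) (hbI.trans hIcc), by rw [card_insert_of_notMem hnb, hcard]⟩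

lemma upperPerfect_union_image_insert (hM : upperPerfect n (d + 1) M) (hN : upperPerfect n d N) :
    upperPerfect (n + 1) (d + 1) (M ∪ N.image (insert (n + 1))) := by
  intro u hu hcard
  have hu' := erase_subset_Icc_of_subset_Icc_succ hu
  by_cases hnu : n + 1 ∈ u
  · obtain ⟨b, hb, hbu⟩ := hN _ hu' (by rw [card_erase_of_mem hnu, hcard, Nat.add_sub_cancel])
    refine ⟨insert (n + 1) b, mem_union_right _ (mem_image_of_mem _ hb), ?_⟩
    simpa only [insert_erase hnu] using insert_subset_insert (n + 1) hbu
  · obtain ⟨a, ha, hau⟩ := hM u (by rwa [erase_eq_of_notMem hnu] at hu') hcard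
    exact ⟨a, mem_union_left _ ha, hau⟩

lemma lowerPerfect_union_image_insert (hM : lowerPerfect n (d + 1) M) (hN : lowerPerfect n d N) :
    lowerPerfect (n + 1) (d + 1) (M ∪ N.image (insert (n + 1))) := by
  intro v hv hcard
  have hv' := erase_subset_Icc_of_subset_Icc_succ hv
  by_cases hnv : n + 1 ∈ v
  · obtain ⟨b, hb, hvb⟩ := hN _ hv' (by rw [card_erase_of_mem hnv, hcard, Nat.add_sub_cancel])
    refine ⟨insert (n + 1) b, mem_union_right _ (mem_image_of_mem _ hb), ?_⟩
    simpa only [insert_erase hnv] using insert_subset_insert (n + 1) hvb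
  · obtain ⟨a, ha, hva⟩ := hM v (by rwa [erase_eq_of_notMem hnv] at hv') hcard
    exact ⟨a, mem_union_left _ ha, hva⟩

end Extension

theorem HasSmallPerfectFam.succ {n d : ℕ} (hM : HasSmallPerfectFam n (d + 1))
    (hN : HasSmallPerfectFam n d) : HasSmallPerfectFam (n + 1) (d + 1) := by
  obtain ⟨M, hMfam, ⟨hMup, hMlow⟩, hMcard⟩ := hM
  obtain ⟨N, hNfam, ⟨hNup, hNlow⟩, hNcard⟩ := hN
  refine ⟨M ∪ N.image (insert (n + 1)), isFam_union_image_insert hMfam hNfam,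
    ⟨upperPerfect_union_image_insert hMup hNup, lowerPerfect_union_image_insert hMlow hNlow⟩, ?_⟩
  have hcard : #(M ∪ N.image (insert (n + 1))) ≤ #M + #N :=
    (card_union_le _ _).trans (Nat.add_le_add_left card_image_le _)
  rw [Nat.choose_succ_succ']
  omega

theorem hasSmallPerfectFam {n d : ℕ} (hd : 2 ≤ d) (hn : d + 2 ≤ n) : HasSmallPerfectFam n d := by
  induction n generalizing d with
  | zero => omega
  | succ m ih =>
    obtain rfl | hd3 := hd.eq_or_lt
    · exact hasSmallPerfectFam_two (by omega)
    obtain htop | hlt := hn.eq_or_lt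
    · rw [← htop]
      simpa only [Nat.add_sub_cancel] using
        (hasSmallPerfectFam_two (n := d + 2) (by omega)).sdiff (by omega)
    obtain ⟨e, rfl⟩ : ∃ e, d = e + 1 := ⟨d - 1, by omega⟩
    exact (ih hd (by omega)).succ (ih (by omega) (by omega))

theorem stmt_5 (n d : ℕ) (hd : 2 ≤ d) (hn : d + 2 ≤ n) :
    ∃ M : Finset (Finset ℕ), isFam n d M ∧ perfectFam n d M ∧
      2 * M.card ≤ n.choose d :=
  hasSmallPerfectFam hd hn
end

section
/- For n = 2k with k ≥ 2, the minimum cardinality of a perfect family of 2-element subsets of [n] is k² - k; for n = 2k+1 with k ≥ 2, this minimum is k². -/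
/-!
The lower bound is Mantel's theorem: the pairs of `[n]` that are not in an upper-perfect family
form a triangle-free graph, which has at most `⌊n/2⌋ * ⌈n/2⌉` edges. It is attained by the two
cliques on `{1, …, ⌊n/2⌋}` and on the remaining `⌈n/2⌉` points, which also cover every point once
both halves have at least two elements; the count matches because
`C(a + b, 2) = C(a, 2) + C(b, 2) + a * b`.
-/

open Finset SimpleGraph

theorem Nat.add_choose_two (a b : ℕ) :
    (a + b).choose 2 = a.choose 2 + b.choose 2 + a * b := by
  induction b with
  | zero => simp
  | succ b ih =>
    rw [← add_assoc, Nat.choose_succ_succ', Nat.choose_succ_succ' b, ih, Nat.choose_one_right,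
      Nat.choose_one_right]
    ring

theorem Sym2.toFinset_injective {α : Type*} [DecidableEq α] :
    Function.Injective (Sym2.toFinset : Sym2 α → Finset α) :=
  fun _ _ h => Sym2.ext fun x => by rw [← Sym2.mem_toFinset, h, Sym2.mem_toFinset]

theorem SimpleGraph.CliqueFree.card_edgeFinset_le_half_mul_half {V : Type*} [Fintype V]
    {G : SimpleGraph V} [DecidableRel G.Adj] (hG : G.CliqueFree 3) :
    #G.edgeFinset ≤ Fintype.card V / 2 * ((Fintype.card V + 1) / 2) := by
  classical
  refine (hG.card_edgeFinset_le (r := 2)).trans ?_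
  obtain ⟨a, h | h⟩ := Nat.even_or_odd' (Fintype.card V) <;> rw [h]
  · have h1 : (2 * a) ^ 2 = 4 * (a * a) := by ring
    have h2 : 2 * a % 2 = 0 := by omega
    have h3 : 2 * a / 2 = a := by omega
    have h4 : (2 * a + 1) / 2 = a := by omega
    simp [h1, h2, h3, h4]
  · have h1 : (2 * a + 1) ^ 2 = 4 * (a * (a + 1)) + 1 := by ring
    have h2 : (2 * a + 1) % 2 = 1 := by omega
    have h3 : (2 * a + 1) / 2 = a := by omega
    have h4 : (2 * a + 1 + 1) / 2 = a + 1 := by omega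
    simp [h1, h2, h3, h4]

section MissedGraph

variable {α : Type*} [DecidableEq α] (S : Finset α) (M : Finset (Finset α))

def missedGraph : SimpleGraph S where
  Adj x y := x ≠ y ∧ ({x.1, y.1} : Finset α) ∉ M
  symm := ⟨fun _ _ h => ⟨h.1.symm, by rw [pair_comm]; exact h.2⟩⟩
  loopless := ⟨fun _ h => h.1 rfl⟩

instance : DecidableRel (missedGraph S M).Adj := fun _ _ => instDecidableAnd

variable {S M}

theorem missedGraph_cliqueFree_three (hM : ∀ a ∈ M, #a = 2)
    (hU : ∀ u ⊆ S, #u = 3 → ∃ a ∈ M, a ⊆ u) : (missedGraph S M).CliqueFree 3 := by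
  intro t ht
  obtain ⟨x, y, z, ⟨hxy, hxyM⟩, ⟨hxz, hxzM⟩, ⟨hyz, hyzM⟩, rfl⟩ := is3Clique_iff.1 ht
  obtain ⟨a, haM, hau⟩ := hU {x.1, y.1, z.1} (by simp [insert_subset_iff])
    (card_eq_three.2 ⟨x, y, z, Subtype.coe_ne_coe.2 hxy, Subtype.coe_ne_coe.2 hxz,
      Subtype.coe_ne_coe.2 hyz, rfl⟩)
  obtain ⟨p, q, hpq, rfl⟩ := card_eq_two.1 (hM a haM)
  simp only [insert_subset_iff, mem_insert, mem_singleton, singleton_subset_iff] at hau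
  rcases hau with ⟨rfl | rfl | rfl, rfl | rfl | rfl⟩ <;> simp_all [pair_comm]

theorem card_compl_missedGraph_edgeFinset_le : #(missedGraph S M)ᶜ.edgeFinset ≤ #M := by
  refine card_le_card_of_injOn (Sym2.toFinset ∘ Sym2.map Subtype.val) ?_
    (Sym2.toFinset_injective.comp (Sym2.map.injective Subtype.val_injective)).injOn
  intro e he
  induction e with
  | _ x y =>
    rw [mem_coe, mem_edgeFinset, mem_edgeSet, compl_adj, missedGraph, not_and, not_not] at he
    simpa [Sym2.toFinset_mk_eq] using he.2 he.1

theorem choose_two_le_card_add_of_forall_card_three (hM : ∀ a ∈ M, #a = 2)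
    (hU : ∀ u ⊆ S, #u = 3 → ∃ a ∈ M, a ⊆ u) :
    (#S).choose 2 ≤ #M + #S / 2 * ((#S + 1) / 2) := by
  have hmantel := (missedGraph_cliqueFree_three hM hU).card_edgeFinset_le_half_mul_half
  rw [Fintype.card_coe] at hmantel
  calc (#S).choose 2 = #(⊤ : SimpleGraph S).edgeFinset := by
        rw [card_edgeFinset_top_eq_card_choose_two, Fintype.card_coe]
    _ = #((missedGraph S M)ᶜ.edgeFinset ∪ (missedGraph S M).edgeFinset) := by
        rw [← edgeFinset_sup]; congr!; exact compl_sup_eq_top.symm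
    _ ≤ _ := (card_union_le _ _).trans (add_le_add card_compl_missedGraph_edgeFinset_le hmantel)

end MissedGraph

section TwoCliques

variable {α : Type*} [DecidableEq α] {A B : Finset α}

theorem card_powersetCard_union_of_disjoint {d : ℕ} (hd : d ≠ 0) (hAB : Disjoint A B) :
    #(A.powersetCard d ∪ B.powersetCard d) = (#A).choose d + (#B).choose d := by
  rw [card_union_of_disjoint, card_powersetCard, card_powersetCard]
  refine disjoint_left.2 fun a haA haB => hd ?_
  rw [mem_powersetCard] at haA haB
  rw [← haA.2, disjoint_self.1 (hAB.mono haA.1 haB.1), bot_eq_empty, card_empty]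

theorem exists_mem_powersetCard_two_subset {u : Finset α} (h : 2 ≤ #(u ∩ A)) :
    ∃ a ∈ A.powersetCard 2, a ⊆ u := by
  obtain ⟨a, ha, hcard⟩ := exists_subset_card_eq h
  exact ⟨a, mem_powersetCard.2 ⟨ha.trans inter_subset_right, hcard⟩, ha.trans inter_subset_left⟩

theorem exists_mem_powersetCard_two_singleton_subset {x : α} (hx : x ∈ A) (hA : 1 < #A) :
    ∃ a ∈ A.powersetCard 2, {x} ⊆ a := by
  obtain ⟨y, hy, hyx⟩ := exists_mem_ne hA x
  exact ⟨{x, y}, mem_powersetCard.2 ⟨by simp [insert_subset_iff, hx, hy], card_pair hyx.symm⟩,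
    by simp⟩

end TwoCliques

section TwoCliquesInInterval

variable {n : ℕ} {A B : Finset ℕ}

theorem isFam_powersetCard_union_s9 {d : ℕ} (hA : A ⊆ Icc 1 n) (hB : B ⊆ Icc 1 n) :
    isFam n d (A.powersetCard d ∪ B.powersetCard d) := by
  intro a ha
  rcases mem_union.1 ha with h | h <;> rw [mem_powersetCard] at h
  exacts [⟨h.1.trans hA, h.2⟩, ⟨h.1.trans hB, h.2⟩]

theorem upperPerfect_two_powersetCard_union_s9 (hAB : Icc 1 n ⊆ A ∪ B) :
    upperPerfect n 2 (A.powersetCard 2 ∪ B.powersetCard 2) := by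
  intro u hu hcard
  have hsplit : #u ≤ #(u ∩ A) + #(u ∩ B) := calc
    #u ≤ #(u ∩ A ∪ u ∩ B) := card_le_card <| by
      rw [← inter_union_distrib_left]; exact subset_inter subset_rfl (hu.trans hAB)
    _ ≤ _ := card_union_le _ _
  rcases (by omega : 2 ≤ #(u ∩ A) ∨ 2 ≤ #(u ∩ B)) with h | h
  · obtain ⟨a, ha, hau⟩ := exists_mem_powersetCard_two_subset h
    exact ⟨a, mem_union_left _ ha, hau⟩
  · obtain ⟨a, ha, hau⟩ := exists_mem_powersetCard_two_subset h
    exact ⟨a, mem_union_right _ ha, hau⟩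

theorem lowerPerfect_two_powersetCard_union_s9 (hAB : Icc 1 n ⊆ A ∪ B) (hA : 1 < #A)
    (hB : 1 < #B) : lowerPerfect n 2 (A.powersetCard 2 ∪ B.powersetCard 2) := by
  intro u hu hcard
  obtain ⟨x, rfl⟩ := card_eq_one.1 hcard
  rcases mem_union.1 (hAB (hu (mem_singleton_self x))) with hx | hx
  · obtain ⟨a, ha, hxa⟩ := exists_mem_powersetCard_two_singleton_subset hx hA
    exact ⟨a, mem_union_left _ ha, hxa⟩
  · obtain ⟨a, ha, hxa⟩ := exists_mem_powersetCard_two_singleton_subset hx hB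
    exact ⟨a, mem_union_right _ ha, hxa⟩

end TwoCliquesInInterval

theorem exists_perfectFam_two_card_eq {n : ℕ} (hn : 4 ≤ n) :
    ∃ M, isFam n 2 M ∧ perfectFam n 2 M ∧ #M = (n / 2).choose 2 + ((n + 1) / 2).choose 2 := by
  set A := Icc 1 (n / 2)
  set B := Icc (n / 2 + 1) n
  have hA : #A = n / 2 := by rw [Nat.card_Icc, Nat.add_sub_cancel]
  have hB : #B = (n + 1) / 2 := by rw [Nat.card_Icc]; omega
  have hAB : Icc 1 n ⊆ A ∪ B := fun x hx => by
    simp only [A, B, mem_union, mem_Icc] at hx ⊢; omega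
  refine ⟨A.powersetCard 2 ∪ B.powersetCard 2,
    isFam_powersetCard_union_s9 (Icc_subset_Icc_right (Nat.div_le_self n 2))
      (Icc_subset_Icc_left (by omega)),
    ⟨upperPerfect_two_powersetCard_union_s9 hAB,
      lowerPerfect_two_powersetCard_union_s9 hAB (by omega) (by omega)⟩, ?_⟩
  rw [card_powersetCard_union_of_disjoint two_ne_zero, hA, hB]
  exact disjoint_left.2 fun x hxA hxB => by simp only [A, B, mem_Icc] at hxA hxB; omega

theorem choose_two_le_card_of_upperPerfect {n : ℕ} {M : Finset (Finset ℕ)} (hM : isFam n 2 M)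
    (hU : upperPerfect n 2 M) : (n / 2).choose 2 + ((n + 1) / 2).choose 2 ≤ #M := by
  have h := choose_two_le_card_add_of_forall_card_three (fun a ha => (hM a ha).2) hU
  rw [Nat.card_Icc, Nat.add_sub_cancel] at h
  have hsplit := Nat.add_choose_two (n / 2) ((n + 1) / 2)
  rw [show n / 2 + (n + 1) / 2 = n by omega] at hsplit
  omega

theorem isLeast_card_perfectFam_two {n : ℕ} (hn : 4 ≤ n) :
    IsLeast {m : ℕ | ∃ M : Finset (Finset ℕ), isFam n 2 M ∧ perfectFam n 2 M ∧ M.card = m}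
      ((n / 2).choose 2 + ((n + 1) / 2).choose 2) := by
  refine ⟨exists_perfectFam_two_card_eq hn, ?_⟩
  rintro m ⟨M, hM, hperf, rfl⟩
  exact choose_two_le_card_of_upperPerfect hM hperf.1

theorem stmt_9 (k : ℕ) (hk : 2 ≤ k) :
    IsLeast {m : ℕ | ∃ M : Finset (Finset ℕ),
        isFam (2 * k) 2 M ∧ perfectFam (2 * k) 2 M ∧ M.card = m} (k ^ 2 - k) ∧
    IsLeast {m : ℕ | ∃ M : Finset (Finset ℕ),
        isFam (2 * k + 1) 2 M ∧ perfectFam (2 * k + 1) 2 M ∧ M.card = m} (k ^ 2) := by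
  have hchoose : k.choose 2 + k.choose 2 = k ^ 2 - k := by
    rw [← two_mul, Nat.choose_two_right, Nat.mul_div_cancel' (Nat.even_mul_pred_self k).two_dvd,
      Nat.mul_sub_one, sq]
  have hchoose' : k.choose 2 + (k + 1).choose 2 = k ^ 2 := by
    rw [Nat.choose_succ_succ', Nat.choose_one_right, add_left_comm, hchoose]
    exact Nat.add_sub_cancel' (Nat.le_self_pow two_ne_zero k)
  constructor
  · have h := isLeast_card_perfectFam_two (n := 2 * k) (by omega)
    rwa [show 2 * k / 2 = k by omega, show (2 * k + 1) / 2 = k by omega, hchoose] at h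
  · have h := isLeast_card_perfectFam_two (n := 2 * k + 1) (by omega)
    rwa [show (2 * k + 1) / 2 = k by omega, show (2 * k + 1 + 1) / 2 = k + 1 by omega,
      hchoose'] at h
end

section
/- Let d ≥ 3 and n ≥ d+2. Suppose A is a perfect family of d-element subsets of [n-1] and B₁ is a perfect family of (d-1)-element subsets of [n-1]. Let B = { b ∪ {n} : b ∈ B₁ }. Then A ∪ B is a perfect family of d-element subsets of [n]. -/
namespace Finset

lemma subset_Icc_of_subset_Icc_add_one {m : ℕ} {u : Finset ℕ} (hu : u ⊆ Icc 1 (m + 1))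
    (hm : m + 1 ∉ u) : u ⊆ Icc 1 m := by
  rwa [← insert_Icc_right_eq_Icc_add_one (by omega), subset_insert_iff_of_notMem hm] at hu

lemma erase_subset_Icc_of_subset_Icc_add_one {m : ℕ} {u : Finset ℕ} (hu : u ⊆ Icc 1 (m + 1)) :
    u.erase (m + 1) ⊆ Icc 1 m := by
  rwa [← insert_Icc_right_eq_Icc_add_one (by omega), subset_insert_iff] at hu

end Finset

open Finset

section Extension

variable {m k : ℕ} {A B : Finset (Finset ℕ)}

lemma isFam_union_image_insert_s15 (hA : isFam m (k + 1) A) (hB : isFam m k B) :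
    isFam (m + 1) (k + 1) (A ∪ B.image (insert (m + 1))) := by
  intro a ha
  rcases mem_union.mp ha with ha | ha
  · obtain ⟨haI, hcard⟩ := hA a ha
    exact ⟨haI.trans (Icc_subset_Icc_right m.le_succ), hcard⟩
  · obtain ⟨b, hb, rfl⟩ := mem_image.mp ha
    obtain ⟨hbI, hcard⟩ := hB b hb
    have hm : m + 1 ∉ b := fun h => by simpa using hbI h
    refine ⟨?_, by rw [card_insert_of_notMem hm, hcard]⟩
    rw [← insert_Icc_right_eq_Icc_add_one (by omega)]
    exact insert_subset_insert _ hbI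

lemma upperPerfect_union_image_insert_s15 (hA : upperPerfect m (k + 1) A) (hB : upperPerfect m k B) :
    upperPerfect (m + 1) (k + 1) (A ∪ B.image (insert (m + 1))) := by
  intro u hu hcard
  by_cases hm : m + 1 ∈ u
  · have hcard' : (u.erase (m + 1)).card = k + 1 := by rw [card_erase_of_mem hm, hcard]; rfl
    obtain ⟨b, hb, hbu⟩ := hB _ (erase_subset_Icc_of_subset_Icc_add_one hu) hcard'
    exact ⟨insert (m + 1) b, mem_union_right _ (mem_image_of_mem _ hb),
      insert_subset hm (hbu.trans (erase_subset _ _))⟩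
  · obtain ⟨a, ha, hau⟩ := hA u (subset_Icc_of_subset_Icc_add_one hu hm) hcard
    exact ⟨a, mem_union_left _ ha, hau⟩

lemma lowerPerfect_union_image_insert_s15 (hA : lowerPerfect m (k + 1) A) (hB : lowerPerfect m k B) :
    lowerPerfect (m + 1) (k + 1) (A ∪ B.image (insert (m + 1))) := by
  intro u hu hcard
  by_cases hm : m + 1 ∈ u
  · have hcard' : (u.erase (m + 1)).card = k - 1 := by rw [card_erase_of_mem hm, hcard]; rfl
    obtain ⟨b, hb, hub⟩ := hB _ (erase_subset_Icc_of_subset_Icc_add_one hu) hcard'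
    exact ⟨insert (m + 1) b, mem_union_right _ (mem_image_of_mem _ hb), subset_insert_iff.mpr hub⟩
  · obtain ⟨a, ha, hua⟩ := hA u (subset_Icc_of_subset_Icc_add_one hu hm) hcard
    exact ⟨a, mem_union_left _ ha, hua⟩

lemma perfectFam_union_image_insert (hA : perfectFam m (k + 1) A) (hB : perfectFam m k B) :
    perfectFam (m + 1) (k + 1) (A ∪ B.image (insert (m + 1))) :=
  ⟨upperPerfect_union_image_insert_s15 hA.1 hB.1, lowerPerfect_union_image_insert_s15 hA.2 hB.2⟩

end Extension

theorem stmt_15 (n d : ℕ) (hd : 3 ≤ d) (hn : d + 2 ≤ n)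
    (A : Finset (Finset ℕ)) (hA : isFam (n - 1) d A) (hAperf : perfectFam (n - 1) d A)
    (B₁ : Finset (Finset ℕ)) (hB₁ : isFam (n - 1) (d - 1) B₁)
    (hB₁perf : perfectFam (n - 1) (d - 1) B₁) :
    isFam n d (A ∪ B₁.image (insert n)) ∧ perfectFam n d (A ∪ B₁.image (insert n)) := by
  obtain ⟨m, rfl⟩ : ∃ m, n = m + 1 := ⟨n - 1, by omega⟩
  obtain ⟨k, rfl⟩ : ∃ k, d = k + 1 := ⟨d - 1, by omega⟩
  simp only [Nat.add_sub_cancel] at hA hAperf hB₁ hB₁perf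
  exact ⟨isFam_union_image_insert_s15 hA hB₁, perfectFam_union_image_insert hAperf hB₁perf⟩
end
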